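/- arXiv:2209.05681 — 2 statements merged into one kernel-verified Lean document; each statement's English description precedes it below -/
import Mathlib

section
/- The direct product SL(2, F₃) × SL(2, F₃) of two copies of the special linear group over the field with three elements (i.e., of two copies of the binary tetrahedral group) has Jordan constant equal to 144. -/
/-!
The centre `Z = {±1} × {±1}` of `G = SL(2, F₃) × SL(2, F₃)` has order 4, hence index 144, and
for every finite subgroup `H ≤ G` the subgroup `Z ⊓ H` is normal and abelian in `H` of index
dividing 144. Conversely, taking `H = G`, every normal abelian subgroup of `G` projects onto
normal abelian subgroups of the two factors; in `SL(2, F₃)` a non-central element has two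
non-commuting conjugates, so these projections are central and the subgroup lies in `Z`.
-/

/-- A group `G` is a *Jordan group* if there is a positive integer `d` such that every
finite subgroup `H` of `G` contains a normal abelian subgroup of index at most `d` in `H`. -/
def IsJordanGroup (G : Type*) [Group G] : Prop :=
  ∃ d : ℕ, 0 < d ∧ ∀ H : Subgroup G, Finite H →
    ∃ A : Subgroup H, A.Normal ∧ IsMulCommutative A ∧ A.index ≤ d

/-- The *Jordan constant* of a group `G`: the least positive integer `d` such that every
finite subgroup `H` of `G` contains a normal abelian subgroup of index at most `d` in `H`. -/
noncomputable def jordanConstant (G : Type*) [Group G] : ℕ :=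
  sInf {d : ℕ | 0 < d ∧ ∀ H : Subgroup G, Finite H →
    ∃ A : Subgroup H, A.Normal ∧ IsMulCommutative A ∧ A.index ≤ d}

open Subgroup

/-- `jordanConstant G` is by definition `sInf {d | IsJordanBound G d}`. -/
def IsJordanBound (G : Type*) [Group G] (d : ℕ) : Prop :=
  0 < d ∧ ∀ H : Subgroup G, Finite H → ∃ A : Subgroup H, A.Normal ∧ IsMulCommutative A ∧ A.index ≤ d

section JordanConstant

variable {G : Type*} [Group G]

theorem isJordanBound_index (A : Subgroup G) [A.Normal] [IsMulCommutative A] [A.FiniteIndex] :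
    IsJordanBound G A.index :=
  ⟨Nat.pos_of_ne_zero FiniteIndex.index_ne_zero, fun H _ => ⟨A.subgroupOf H, inferInstance,
    inferInstance, Nat.le_of_dvd (Nat.pos_of_ne_zero FiniteIndex.index_ne_zero)
      (A.relIndex_dvd_index_of_normal H)⟩⟩

theorem jordanConstant_le_index (A : Subgroup G) [A.Normal] [IsMulCommutative A]
    [A.FiniteIndex] : jordanConstant G ≤ A.index :=
  Nat.sInf_le (isJordanBound_index A)

theorem exists_normal_isMulCommutative_index_le_jordanConstant [Finite G] :
    ∃ A : Subgroup G, A.Normal ∧ IsMulCommutative A ∧ A.index ≤ jordanConstant G := by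
  obtain ⟨-, hH⟩ : IsJordanBound G (jordanConstant G) :=
    Nat.sInf_mem (s := {d | IsJordanBound G d}) ⟨_, isJordanBound_index (⊥ : Subgroup G)⟩
  obtain ⟨A, hAn, hAc, hAi⟩ := hH ⊤ inferInstance
  exact ⟨A.map (topEquiv : (⊤ : Subgroup G) ≃* G).toMonoidHom, hAn.map _ topEquiv.surjective,
    inferInstance, (index_map_of_bijective topEquiv.bijective A).trans_le hAi⟩

theorem jordanConstant_eq_index_center [Finite G]
    (h : ∀ N : Subgroup G, N.Normal → IsMulCommutative N → N ≤ center G) :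
    jordanConstant G = (center G).index := by
  refine (jordanConstant_le_index _).antisymm ?_
  obtain ⟨A, hAn, hAc, hAi⟩ := exists_normal_isMulCommutative_index_le_jordanConstant (G := G)
  exact (index_antitone (h A hAn hAc)).trans hAi

end JordanConstant

theorem Subgroup.le_center_of_exists_conj_not_commute {G : Type*} [Group G]
    (hG : ∀ x ∉ center G, ∃ a b : G, ¬Commute (a * x * a⁻¹) (b * x * b⁻¹))
    (N : Subgroup G) [N.Normal] [IsMulCommutative N] : N ≤ center G := by
  intro x hx
  by_contra hxc
  obtain ⟨a, b, hab⟩ := hG x hxc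
  exact hab (setLike_mul_comm (s := N) (Normal.conj_mem ‹_› x hx a) (Normal.conj_mem ‹_› x hx b))

theorem Subgroup.prod_le_center {G₁ G₂ : Type*} [Group G₁] [Group G₂]
    (h₁ : ∀ N : Subgroup G₁, N.Normal → IsMulCommutative N → N ≤ center G₁)
    (h₂ : ∀ N : Subgroup G₂, N.Normal → IsMulCommutative N → N ≤ center G₂)
    (N : Subgroup (G₁ × G₂)) (hN : N.Normal) (_ : IsMulCommutative N) : N ≤ center (G₁ × G₂) := by
  intro x hx
  rw [Subgroup.center_prod, mem_prod]
  exact ⟨h₁ _ (hN.map _ Prod.fst_surjective) inferInstance (mem_map_of_mem (MonoidHom.fst _ _) hx),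
    h₂ _ (hN.map _ Prod.snd_surjective) inferInstance (mem_map_of_mem (MonoidHom.snd _ _) hx)⟩

namespace Matrix.SpecialLinearGroup

theorem exists_conj_not_commute_of_not_mem_center_two_zmod_three
    (x : SpecialLinearGroup (Fin 2) (ZMod 3)) (hx : x ∉ center _) :
    ∃ a b, ¬Commute (a * x * a⁻¹) (b * x * b⁻¹) := by
  revert x
  unfold Commute SemiconjBy
  decide

theorem index_center_two_zmod_three : (center (SpecialLinearGroup (Fin 2) (ZMod 3))).index = 12 := by
  have hcard : Nat.card (SpecialLinearGroup (Fin 2) (ZMod 3)) = 24 := by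
    rw [Nat.card_eq_fintype_card]; decide
  have hcenter : Nat.card (center (SpecialLinearGroup (Fin 2) (ZMod 3))) = 2 := by
    rw [Nat.card_eq_fintype_card]; decide
  have := index_mul_card (center (SpecialLinearGroup (Fin 2) (ZMod 3)))
  rw [hcenter, hcard] at this
  omega

end Matrix.SpecialLinearGroup

/-- The direct product `SL(2, F₃) × SL(2, F₃)` has Jordan constant `144`. -/
theorem stmt_6 :
    jordanConstant
      (Matrix.SpecialLinearGroup (Fin 2) (ZMod 3) ×
        Matrix.SpecialLinearGroup (Fin 2) (ZMod 3)) = 144 := by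
  have hSL := le_center_of_exists_conj_not_commute
    Matrix.SpecialLinearGroup.exists_conj_not_commute_of_not_mem_center_two_zmod_three
  rw [jordanConstant_eq_index_center (prod_le_center (fun N _ _ => hSL N) (fun N _ _ => hSL N)),
    Subgroup.center_prod, index_prod, Matrix.SpecialLinearGroup.index_center_two_zmod_three]
end

section
/- Let B = Dic₁₂ × Dic₁₂ be the direct product of two copies of the dicyclic group of order 12, and let φ : C₂ → Aut(B) be the homomorphism sending the nonidentity element of the cyclic group C₂ of order 2 to the automorphism of B swapping the two factors. Then the semidirect product G = B ⋊_φ C₂ (of order 288) has Jordan constant equal to 8. -/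
/-!
An abelian subgroup `A` of `G = (Dic₁₂ × Dic₁₂) ⋊ C₂` has order at most `36`. Inside the
base, its two projections are abelian subgroups of `Dic₁₂`, hence of order at most `6`.
Otherwise `A` contains an element `g` acting by the swap, and commuting with `g` determines
the first coordinate of any `h ∈ A` from its second coordinate and its `C₂`-part, so
`|A| ≤ 12 · 2`. Hence every abelian subgroup has index at least `288 / 36 = 8`, and this is
attained by the normal subgroup `C₆ × C₆` of the base; intersecting it with a subgroup `H`
gives a normal abelian subgroup of `H` of index dividing `8`.
-/

open SemidirectProduct

section JordanConstant

variable {G : Type*} [Group G]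

lemma exists_normal_isMulCommutative_index_le (N : Subgroup G) [N.Normal] [IsMulCommutative N]
    [N.FiniteIndex] (H : Subgroup G) :
    ∃ A : Subgroup H, A.Normal ∧ IsMulCommutative A ∧ A.index ≤ N.index :=
  ⟨N.subgroupOf H, inferInstance, inferInstance,
    Nat.le_of_dvd (Nat.pos_of_ne_zero Subgroup.FiniteIndex.index_ne_zero)
      (N.relIndex_dvd_index_of_normal H)⟩

theorem jordanConstant_eq_index [Finite G] (N : Subgroup G) [N.Normal] [IsMulCommutative N]
    (hmin : ∀ A : Subgroup G, IsMulCommutative A → N.index ≤ A.index) :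
    jordanConstant G = N.index := by
  have hN : N.index ∈ {d : ℕ | 0 < d ∧ ∀ H : Subgroup G, Finite H →
      ∃ A : Subgroup H, A.Normal ∧ IsMulCommutative A ∧ A.index ≤ d} :=
    ⟨Nat.pos_of_ne_zero Subgroup.FiniteIndex.index_ne_zero,
      fun H _ => exists_normal_isMulCommutative_index_le N H⟩
  refine le_antisymm (Nat.sInf_le hN) (le_csInf ⟨_, hN⟩ ?_)
  rintro d ⟨-, hd⟩
  obtain ⟨A, -, hA, hAd⟩ := hd ⊤ inferInstance
  calc N.index ≤ (A.map (⊤ : Subgroup G).subtype).index := hmin _ inferInstance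
    _ = A.index := by rw [Subgroup.index_map_subtype, Subgroup.index_top, mul_one]
    _ ≤ d := hAd

end JordanConstant

namespace Subgroup

variable {G : Type*} [Group G]

lemma card_mul_two_le_of_isMulCommutative [Finite G] (hG : ¬ IsMulCommutative G)
    (A : Subgroup G) [IsMulCommutative A] : Nat.card A * 2 ≤ Nat.card G := by
  have hA : A ≠ ⊤ := by
    rintro rfl
    exact hG ⟨⟨fun x y => setLike_mul_comm (s := (⊤ : Subgroup G)) trivial trivial⟩⟩
  rw [← A.card_mul_index]
  exact Nat.mul_le_mul_left _ (A.one_lt_index_of_ne_top hA)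

instance prod_isMulCommutative {M N : Type*} [Group M] [Group N] (H : Subgroup M)
    (K : Subgroup N) [IsMulCommutative H] [IsMulCommutative K] : IsMulCommutative (H.prod K) :=
  .of_setLike_mul_comm fun _ ha _ hb =>
    Prod.ext (setLike_mul_comm ha.1 hb.1) (setLike_mul_comm ha.2 hb.2)

lemma card_le_mul_of_isMulCommutative_prod {M N : Type*} [Group M] [Group N] [Finite M]
    [Finite N] {m n : ℕ} (hM : ∀ S : Subgroup M, IsMulCommutative S → Nat.card S ≤ m)
    (hN : ∀ S : Subgroup N, IsMulCommutative S → Nat.card S ≤ n)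
    (A : Subgroup (M × N)) [IsMulCommutative A] : Nat.card A ≤ m * n := by
  have hle : A ≤ (A.map (MonoidHom.fst M N)).prod (A.map (MonoidHom.snd M N)) :=
    le_prod_iff.mpr ⟨le_rfl, le_rfl⟩
  calc Nat.card A ≤ Nat.card ((A.map (MonoidHom.fst M N)).prod (A.map (MonoidHom.snd M N))) :=
        card_le_of_le hle
    _ = Nat.card (A.map (MonoidHom.fst M N)) * Nat.card (A.map (MonoidHom.snd M N)) := by
        rw [Nat.card_congr (prodEquiv _ _).toEquiv, Nat.card_prod]
    _ ≤ m * n := Nat.mul_le_mul (hM _ inferInstance) (hN _ inferInstance)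

end Subgroup

lemma QuaternionGroup.not_isMulCommutative {n : ℕ} (hn : 1 < n) :
    ¬ IsMulCommutative (QuaternionGroup n) := fun h => by
  have := h.is_comm.comm (a 1) (xa 0)
  rw [a_mul_xa, xa_mul_a, xa.injEq, zero_sub, zero_add, neg_eq_iff_add_eq_zero,
    one_add_one_eq_two] at this
  have hdvd := (ZMod.natCast_eq_zero_iff 2 (2 * n)).mp (by exact_mod_cast this)
  exact absurd (Nat.le_of_dvd two_pos hdvd) (by omega)

lemma Multiplicative.zmod_two_eq_one_or_eq_ofAdd_one (t : Multiplicative (ZMod 2)) :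
    t = 1 ∨ t = ofAdd 1 := by
  revert t; decide

namespace SemidirectProduct

section

variable {N H : Type*} [Group N] [Group H] {φ : H →* MulAut N}

instance [Finite N] [Finite H] : Finite (N ⋊[φ] H) :=
  Finite.of_equiv _ equivProd.symm

lemma mem_range_inl_iff {g : N ⋊[φ] H} : g ∈ (inl (φ := φ)).range ↔ g.right = 1 := by
  rw [range_inl_eq_ker_rightHom, MonoidHom.mem_ker, rightHom_eq_right]

lemma card_le_of_isMulCommutative_of_le_range_inl {m : ℕ}
    (hm : ∀ S : Subgroup N, IsMulCommutative S → Nat.card S ≤ m)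
    (A : Subgroup (N ⋊[φ] H)) [IsMulCommutative A] (hA : A ≤ (inl (φ := φ)).range) :
    Nat.card A ≤ m := by
  rw [← Subgroup.map_comap_eq_self hA, Subgroup.card_map_of_injective inl_injective]
  exact hm _ (A.comap_injective_isMulCommutative inl_injective)

end

section SwapAction

variable {M : Type*} [Group M] {φ : Multiplicative (ZMod 2) →* MulAut (M × M)}

lemma eq_one_or_eq_prodComm (hφ : φ (Multiplicative.ofAdd 1) = MulEquiv.prodComm)
    (t : Multiplicative (ZMod 2)) : φ t = 1 ∨ φ t = MulEquiv.prodComm := by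
  obtain rfl | rfl := Multiplicative.zmod_two_eq_one_or_eq_ofAdd_one t
  exacts [.inl (map_one φ), .inr hφ]

lemma normal_map_inl_prod (hφ : φ (Multiplicative.ofAdd 1) = MulEquiv.prodComm)
    (R : Subgroup M) [R.Normal] : ((R.prod R).map (inl (φ := φ))).Normal where
  conj_mem := by
    rintro _ ⟨b, hb : b ∈ R.prod R, rfl⟩ g
    have hconj : g * inl b * g⁻¹ = inl (g.left * φ g.right b * g.left⁻¹) := by
      ext <;> simp [mul_assoc, MulAut.inv_def]
    have hφb : φ g.right b ∈ R.prod R := by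
      rw [Subgroup.mem_prod] at hb
      rcases eq_one_or_eq_prodComm hφ g.right with h | h <;> rw [h]
      · exact hb
      · exact Subgroup.mem_prod.mpr hb.symm
    rw [hconj]
    exact ⟨_, (Subgroup.prod_normal R R).conj_mem _ hφb _, rfl⟩

lemma index_map_inl_prod (R : Subgroup M) :
    ((R.prod R).map (inl (φ := φ))).index = R.index * R.index * 2 := by
  rw [Subgroup.index_map_of_injective _ inl_injective, Subgroup.index_prod,
    range_inl_eq_ker_rightHom, Subgroup.index_ker, MonoidHom.range_eq_top.mpr rightHom_surjective,
    Subgroup.card_top]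
  simp

lemma card_le_of_isMulCommutative_of_not_le_range_inl [Finite M]
    (hφ : φ (Multiplicative.ofAdd 1) = MulEquiv.prodComm)
    (A : Subgroup ((M × M) ⋊[φ] Multiplicative (ZMod 2))) [IsMulCommutative A]
    (hA : ¬ A ≤ (inl (φ := φ)).range) : Nat.card A ≤ Nat.card M * 2 := by
  obtain ⟨g, hgA, hg⟩ := Set.not_subset.mp hA
  have hφg : φ g.right = MulEquiv.prodComm := by
    have hright : g.right ≠ 1 := mt mem_range_inl_iff.mpr hg
    rw [(Multiplicative.zmod_two_eq_one_or_eq_ofAdd_one g.right).resolve_left hright, hφ]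
  -- `g` acts by the swap, so the first coordinate of `g * h = h * g` pins down `h.left.1`.
  have hcomm (h) (hh : h ∈ A) : g.left.1 * h.left.2 = h.left.1 * (φ h.right g.left).1 := by
    simpa [hφg] using congrArg (fun x => x.left.1) (setLike_mul_comm hgA hh)
  have hinj : Function.Injective fun h : A => ((h : _ ⋊[φ] _).left.2, (h : _ ⋊[φ] _).right) := by
    rintro ⟨h₁, h₁A⟩ ⟨h₂, h₂A⟩ heq
    obtain ⟨hleft, hright⟩ := Prod.mk.inj heq
    have e₁ := hcomm h₁ h₁A
    rw [hleft, hright, hcomm h₂ h₂A] at e₁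
    exact Subtype.ext (SemidirectProduct.ext (Prod.ext (mul_right_cancel e₁).symm hleft) hright)
  calc Nat.card A ≤ Nat.card (M × Multiplicative (ZMod 2)) :=
        Nat.card_le_card_of_injective _ hinj
    _ = Nat.card M * 2 := by simp

lemma card_le_max_of_isMulCommutative [Finite M]
    (hφ : φ (Multiplicative.ofAdd 1) = MulEquiv.prodComm) {m : ℕ}
    (hm : ∀ S : Subgroup M, IsMulCommutative S → Nat.card S ≤ m)
    (A : Subgroup ((M × M) ⋊[φ] Multiplicative (ZMod 2))) [IsMulCommutative A] :
    Nat.card A ≤ max (m * m) (Nat.card M * 2) := by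
  by_cases hA : A ≤ (inl (φ := φ)).range
  · exact le_max_of_le_left <| card_le_of_isMulCommutative_of_le_range_inl
      (Subgroup.card_le_mul_of_isMulCommutative_prod hm hm) A hA
  · exact le_max_of_le_right (card_le_of_isMulCommutative_of_not_le_range_inl hφ A hA)

end SwapAction

end SemidirectProduct

/-- Let `B = Dic₁₂ × Dic₁₂` and let `φ : C₂ → Aut B` send the nonidentity element to the
swap of the two factors. Then the semidirect product `B ⋊[φ] C₂` (of order `288`) has
Jordan constant `8`. -/
theorem stmt_16
    (φ : Multiplicative (ZMod 2) →* MulAut (QuaternionGroup 3 × QuaternionGroup 3))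
    (hφ : φ (Multiplicative.ofAdd 1) = MulEquiv.prodComm) :
    jordanConstant
      ((QuaternionGroup 3 × QuaternionGroup 3) ⋊[φ] Multiplicative (ZMod 2)) = 8 := by
  have hQ : Nat.card (QuaternionGroup 3) = 12 := by
    rw [Nat.card_eq_fintype_card, QuaternionGroup.card]
  set R := Subgroup.zpowers (QuaternionGroup.a 1 : QuaternionGroup 3)
  have hR : R.index = 2 := by
    have := R.card_mul_index
    rw [Nat.card_zpowers, QuaternionGroup.orderOf_a_one, hQ] at this
    omega
  have := Subgroup.normal_of_index_eq_two hR
  have := normal_map_inl_prod hφ R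
  have hidx : ((R.prod R).map (inl (φ := φ))).index = 8 := by rw [index_map_inl_prod, hR]
  refine hidx ▸ jordanConstant_eq_index _ fun A _ => ?_
  have hm (S : Subgroup (QuaternionGroup 3)) [IsMulCommutative S] : Nat.card S ≤ 6 := by
    have := S.card_mul_two_le_of_isMulCommutative
      (QuaternionGroup.not_isMulCommutative (by norm_num : 1 < 3))
    omega
  have hA : Nat.card A ≤ 36 :=
    (card_le_max_of_isMulCommutative hφ hm A).trans (by rw [hQ]; norm_num)
  have hG : Nat.card A * A.index = 288 := by
    rw [A.card_mul_index, SemidirectProduct.card, Nat.card_prod, hQ]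
    simp
  rw [hidx]
  nlinarith
end
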